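/- Let W be a set of allowed diagrams in a relational coloring language L, and suppose ER(w;W) = ∞ for every w ∈ W^1. Then K(W) has the disjoint amalgamation property for models of size λ for every infinite cardinal λ. -/
import Mathlib


universe u v

open Cardinal

/-- A relational coloring language: a family of pairwise disjoint nonempty sets `R_n`
(`n ≥ 1`) of `n`-ary colors, encoded as a type of colors together with an arity map
whose fibers over `n ≥ 1` are all nonempty. -/
structure ColoringLanguage : Type (u + 1) where
  Color : Type u
  arity : Color → ℕ
  arity_pos : ∀ r, 1 ≤ arity r
  exists_arity : ∀ n : ℕ, 1 ≤ n → ∃ r, arity r = n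

namespace ColoringLanguage

variable (L : ColoringLanguage.{u})

/-- A diagram is (encoded as) a list of colors whose `i`-th entry (0-based) is an
`(i+1)`-ary color; it represents the function `w : [n] → R` with `w(k) ∈ R_k`. -/
def IsDiagram (l : List L.Color) : Prop :=
  ∀ (i : ℕ) (h : i < l.length), L.arity l[i] = i + 1

/-- A set of allowed diagrams: a nonempty set of diagrams closed under restriction to
initial segments. -/
def IsAllowed (W : Set (List L.Color)) : Prop :=
  W.Nonempty ∧ (∀ l ∈ W, L.IsDiagram l) ∧ ∀ l ∈ W, ∀ m : ℕ, l.take m ∈ W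

end ColoringLanguage

/-- `ERge W γ l` says that the existence rank of `l` with respect to `W` is `≥ γ`:
`ER(l;W) ≥ β + 1` iff some one-step extension `l' ∈ W` of `l` has `ER(l';W) ≥ β`,
with the limit (and zero) clauses as usual. -/
noncomputable def ERge {C : Type v} (W : Set (List C)) : Ordinal.{u} → List C → Prop :=
  WellFounded.fix Ordinal.lt_wf fun α IH l =>
    ∀ β, ∀ h : β < α,
      ∃ l' ∈ W, l'.length = l.length + 1 ∧ l'.take l.length = l ∧ IH β h l'

/-- `prunedW W S` is `W_S`, the set of elements of `W` comparable with some element of `S`. -/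
def prunedW {C : Type v} (W S : Set (List C)) : Set (List C) :=
  {w ∈ W | ∃ u ∈ S, w <+: u ∨ u <+: w}

/-- `quotW W wbar` is `W / w̄`: the set of diagrams `w / w̄` for `w ∈ W` extending `w̄`. -/
def quotW {C : Type v} (W : Set (List C)) (wbar : List C) : Set (List C) :=
  (fun l => l.drop wbar.length) '' {l ∈ W | wbar <+: l}

/-- The beth function with base `κ`: `ℶ_0(κ) = κ`, `ℶ_{α+1}(κ) = 2 ^ ℶ_α(κ)`,
and suprema at limits. -/
noncomputable def bethF (κ : Cardinal.{u}) (o : Ordinal.{u}) : Cardinal.{u} :=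
  Ordinal.limitRecOn o κ (fun _ ih => 2 ^ ih)
    fun o' _ ih => ⨆ b : Set.Iio o', ih b.1 b.2

/-- The cardinals `κ_α`: `κ_α = α` for finite `α`, suprema at limits, and
`κ_{β+1} = 2 ^ κ_β` for `β ≥ ω`. -/
noncomputable def kappaC (o : Ordinal.{u}) : Cardinal.{u} :=
  Ordinal.limitRecOn o 0
    (fun o' ih => if o' < Ordinal.omega0 then ih + 1 else 2 ^ ih)
    fun o' _ ih => ⨆ b : Set.Iio o', ih b.1 b.2

namespace ColoringLanguage

variable (L : ColoringLanguage.{u}) {σ τ : Type u}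

/-- `c` is an `L`-coloring of the set `M`: every finite nonempty `A ⊆ M` gets a color
of arity `|A|`. (Values of `c` outside of `M` are irrelevant.) -/
def IsColoring (M : Set σ) (c : Finset σ → L.Color) : Prop :=
  ∀ A : Finset σ, ↑A ⊆ M → A.Nonempty → L.arity (c A) = A.card

/-- `B` is monochromatic for `c`: any two finite nonempty subsets of `B` of equal size
get the same color. -/
def Mono (c : Finset σ → L.Color) (B : Set σ) : Prop :=
  ∀ A₁ A₂ : Finset σ, ↑A₁ ⊆ B → ↑A₂ ⊆ B → A₁.Nonempty → A₁.card = A₂.card → c A₁ = c A₂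

/-- `l` is the diagram of the (monochromatic) finite set `B` under `c`. -/
def DiagramOf (c : Finset σ → L.Color) (B : Finset σ) (l : List L.Color) : Prop :=
  l.length = B.card ∧ ∀ A : Finset σ, A ⊆ B → A.Nonempty → l[A.card - 1]? = some (c A)

/-- `(M,c)` is a member of the coloring class `K(W)`: `c` is an `L`-coloring of `M`
and every finite nonempty monochromatic subset of `M` has its diagram in `W`. -/
def MemK (W : Set (List L.Color)) (M : Set σ) (c : Finset σ → L.Color) : Prop :=
  L.IsColoring M c ∧
    ∀ B : Finset σ, ↑B ⊆ M → B.Nonempty → L.Mono c ↑B → ∃ l ∈ W, L.DiagramOf c B l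

/-- `(M,c)` is a substructure of `(N,c')`. -/
def Substruct (M : Set σ) (c : Finset σ → L.Color) (N : Set σ)
    (c' : Finset σ → L.Color) : Prop :=
  M ⊆ N ∧ ∀ A : Finset σ, ↑A ⊆ M → A.Nonempty → c A = c' A

/-- `f` is an embedding of `(M,c)` into `(N,c')`. -/
def Emb (f : σ → τ) (M : Set σ) (c : Finset σ → L.Color) (N : Set τ)
    (c' : Finset τ → L.Color) : Prop :=
  Set.InjOn f M ∧ f '' M ⊆ N ∧
    ∀ A : Finset σ, ↑A ⊆ M → A.Nonempty →
      haveI := Classical.decEq τ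
      c' (A.image f) = c A

/-- `K(W)` has the amalgamation property for models of size `lam`. -/
def HasAPAt (W : Set (List L.Color)) (lam : Cardinal.{u}) : Prop :=
  ∀ (σ : Type u) (M₀ M₁ M₂ : Set σ) (c₀ c₁ c₂ : Finset σ → L.Color),
    L.MemK W M₀ c₀ → L.MemK W M₁ c₁ → L.MemK W M₂ c₂ →
    Cardinal.mk ↥M₀ = lam → Cardinal.mk ↥M₁ = lam → Cardinal.mk ↥M₂ = lam →
    L.Substruct M₀ c₀ M₁ c₁ → L.Substruct M₀ c₀ M₂ c₂ →
    ∃ (τ : Type u) (N : Set τ) (c : Finset τ → L.Color) (f₁ f₂ : σ → τ),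
      L.MemK W N c ∧ L.Emb f₁ M₁ c₁ N c ∧ L.Emb f₂ M₂ c₂ N c ∧
      ∀ x ∈ M₀, f₁ x = f₂ x

/-- `K(W)` has the disjoint amalgamation property for models of size `lam`. -/
def HasDAPAt (W : Set (List L.Color)) (lam : Cardinal.{u}) : Prop :=
  ∀ (σ : Type u) (M₀ M₁ M₂ : Set σ) (c₀ c₁ c₂ : Finset σ → L.Color),
    L.MemK W M₀ c₀ → L.MemK W M₁ c₁ → L.MemK W M₂ c₂ →
    Cardinal.mk ↥M₀ = lam → Cardinal.mk ↥M₁ = lam → Cardinal.mk ↥M₂ = lam →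
    L.Substruct M₀ c₀ M₁ c₁ → L.Substruct M₀ c₀ M₂ c₂ →
    ∃ (τ : Type u) (N : Set τ) (c : Finset τ → L.Color) (f₁ f₂ : σ → τ),
      L.MemK W N c ∧ L.Emb f₁ M₁ c₁ N c ∧ L.Emb f₂ M₂ c₂ N c ∧
      (∀ x ∈ M₀, f₁ x = f₂ x) ∧ f₁ '' M₁ ∩ f₂ '' M₂ = f₁ '' M₀

end ColoringLanguage


section AuxER
variable {C : Type u} (W : Set (List C))

theorem ERge_iff' (α : Ordinal.{u}) (l : List C) :
    ERge W α l ↔ ∀ β < α, ∃ l' ∈ W,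
      l'.length = l.length + 1 ∧ l'.take l.length = l ∧ ERge W β l' := by
  unfold ERge
  rw [WellFounded.fix_eq]

theorem ERge_mono {α β : Ordinal.{u}} {l : List C} (h : ERge W α l) (hle : β ≤ α) :
    ERge W β l := by
  rw [ERge_iff'] at h ⊢
  exact fun γ hγ => h γ (lt_of_lt_of_le hγ hle)

theorem ext_step {w : List C} (hw : w ∈ W) (h : ∀ γ : Ordinal.{u}, ERge W γ w) :
    ∃ x, w ++ [x] ∈ W ∧ ∀ γ : Ordinal.{u}, ERge W γ (w ++ [x]) := by
  by_contra hcon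
  push_neg at hcon
  classical
  let γf : C → Ordinal.{u} := fun x =>
    if hx : w ++ [x] ∈ W then (hcon x hx).choose else 0
  obtain ⟨δ, hδ⟩ := Ordinal.bddAbove_range.{u, u} γf
  obtain ⟨l', hl'W, hlen, htake, herge⟩ :=
    (ERge_iff' W (Order.succ δ) w).mp (h (Order.succ δ)) δ (Order.lt_succ δ)
  obtain ⟨x, hx⟩ : ∃ x, l' = w ++ [x] := by
    have h3 : l' = l'.take w.length ++ l'.drop w.length := (List.take_append_drop _ _).symm
    have h4 : (l'.drop w.length).length = 1 := by simp [hlen]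
    obtain ⟨x, hx⟩ := List.length_eq_one_iff.mp h4
    exact ⟨x, by rw [h3, htake, hx]⟩
  subst hx
  have hle : γf x ≤ δ := hδ ⟨x, rfl⟩
  have h5 : ERge W (γf x) (w ++ [x]) := ERge_mono W herge hle
  have h6 : ¬ ERge W ((hcon x hl'W).choose) (w ++ [x]) := (hcon x hl'W).choose_spec
  simp only [γf, dif_pos hl'W] at h5
  exact h6 h5

noncomputable def chainAux (r : C) (hr : [r] ∈ W)
    (hER : ∀ γ : Ordinal.{u}, ERge W γ [r]) :
    ℕ → {l : List C // l ∈ W ∧ ∀ γ : Ordinal.{u}, ERge W γ l}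
  | 0 => ⟨[r], hr, hER⟩
  | n + 1 =>
    let p := chainAux r hr hER n
    ⟨p.1 ++ [(ext_step W p.2.1 p.2.2).choose],
      (ext_step W p.2.1 p.2.2).choose_spec.1,
      (ext_step W p.2.1 p.2.2).choose_spec.2⟩

theorem chainAux_length (r : C) (hr : [r] ∈ W)
    (hER : ∀ γ : Ordinal.{u}, ERge W γ [r]) (n : ℕ) :
    (chainAux W r hr hER n).1.length = n + 1 := by
  induction n with
  | zero => rfl
  | succ n ih => simp [chainAux, ih]

theorem chainAux_prefix (r : C) (hr : [r] ∈ W)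
    (hER : ∀ γ : Ordinal.{u}, ERge W γ [r]) {k n : ℕ} (h : k ≤ n) :
    (chainAux W r hr hER k).1 <+: (chainAux W r hr hER n).1 := by
  induction n with
  | zero => simp_all
  | succ n ih =>
    rcases Nat.lt_or_ge k (n+1) with h' | h'
    · exact (ih (Nat.lt_succ_iff.mp h')).trans (by exact List.prefix_append _ _)
    · have : k = n + 1 := le_antisymm h h'
      subst this
      exact List.prefix_rfl

end AuxER

open Classical in
noncomputable def gseq {C : Type u} (W : Set (List C))
    (h1 : ∀ w ∈ W, w.length = 1 → ∀ γ : Ordinal.{u}, ERge W γ w) (r : C) (n : ℕ) :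
    List C :=
  if hr : [r] ∈ W then (chainAux W r hr (h1 [r] hr rfl) n).1 else []

section Gseq
variable {C : Type u} (W : Set (List C))
    (h1 : ∀ w ∈ W, w.length = 1 → ∀ γ : Ordinal.{u}, ERge W γ w) {r : C}

theorem gseq_mem (hr : [r] ∈ W) (n : ℕ) : gseq W h1 r n ∈ W := by
  simp only [gseq, dif_pos hr]; exact (chainAux W r hr (h1 [r] hr rfl) n).2.1

theorem gseq_length (hr : [r] ∈ W) (n : ℕ) : (gseq W h1 r n).length = n + 1 := by
  simp only [gseq, dif_pos hr]; exact chainAux_length W r hr (h1 [r] hr rfl) n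

theorem gseq_prefix (hr : [r] ∈ W) {k n : ℕ} (h : k ≤ n) :
    gseq W h1 r k <+: gseq W h1 r n := by
  simp only [gseq, dif_pos hr]; exact chainAux_prefix W r hr (h1 [r] hr rfl) h

theorem gseq_zero (hr : [r] ∈ W) : gseq W h1 r 0 = [r] := by
  simp only [gseq, dif_pos hr]; rfl

theorem gseq_getD (hr : [r] ∈ W) (d : C) {k n : ℕ} (h : k ≤ n) :
    (gseq W h1 r n).getD k d = (gseq W h1 r k).getD k d := by
  have hpre := gseq_prefix W h1 hr h
  have hk : k < (gseq W h1 r k).length := by rw [gseq_length W h1 hr]; omega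
  rw [List.getD_eq_getElem _ _ hk, List.getD_eq_getElem _ _ (lt_of_lt_of_le hk hpre.length_le)]
  exact (hpre.getElem hk).symm

end Gseq
theorem singleton_diag_mem {L : ColoringLanguage.{u}} {W : Set (List L.Color)} {σ : Type u}
    {M : Set σ} {cc : Finset σ → L.Color} (hK : L.MemK W M cc) {x : σ} (hx : x ∈ M) :
    [cc {x}] ∈ W := by
  have hsub : ↑({x} : Finset σ) ⊆ M := by simpa using hx
  have hmono : L.Mono cc ↑({x} : Finset σ) := by
    intro A₁ A₂ hA₁ hA₂ hne hcard
    have e₁ : A₁ = {x} := by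
      rcases Finset.subset_singleton_iff.mp (Finset.coe_subset.mp hA₁) with h | h
      · exact absurd h (Finset.nonempty_iff_ne_empty.mp hne)
      · exact h
    have e₂ : A₂ = {x} := by
      rcases Finset.subset_singleton_iff.mp (Finset.coe_subset.mp hA₂) with h | h
      · subst h; simp [e₁] at hcard
      · exact h
    rw [e₁, e₂]
  obtain ⟨l, hlW, hlen, hspec⟩ := hK.2 {x} hsub ⟨x, Finset.mem_singleton_self x⟩ hmono
  have h0 := hspec {x} Finset.Subset.rfl ⟨x, Finset.mem_singleton_self x⟩
  simp only [Finset.card_singleton] at h0 hlen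
  obtain ⟨y, rfl⟩ := List.length_eq_one_iff.mp hlen
  simp only [Nat.sub_self] at h0
  simp at h0
  rwa [h0] at hlW

open Classical in
noncomputable def inj2 {σ : Type u} (M₀ : Set σ) : σ → σ ⊕ σ :=
  fun x => if x ∈ M₀ then Sum.inl x else Sum.inr x

open Classical in
noncomputable def amalgC {L : ColoringLanguage.{u}} (W : Set (List L.Color))
    (h1 : ∀ w ∈ W, w.length = 1 → ∀ γ : Ordinal.{u}, ERge W γ w)
    {σ : Type u} (M₀ M₁ M₂ : Set σ) (c₁ c₂ : Finset σ → L.Color) (d : L.Color) :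
    Finset (σ ⊕ σ) → L.Color := fun A =>
  if (↑A : Set (σ ⊕ σ)) ⊆ Sum.inl '' M₁ then c₁ (A.image (Sum.elim id id))
  else if (↑A : Set (σ ⊕ σ)) ⊆ (inj2 M₀) '' M₂ then c₂ (A.image (Sum.elim id id))
  else if h : A.Nonempty then
    (gseq W h1 (Sum.elim (fun x => c₁ {x}) (fun x => c₂ {x}) h.choose) (A.card - 1)).getD
      (A.card - 1) d
  else d

section AmalgC
open Classical
variable {L : ColoringLanguage.{u}} {W : Set (List L.Color)}
    {h1 : ∀ w ∈ W, w.length = 1 → ∀ γ : Ordinal.{u}, ERge W γ w}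
    {σ : Type u} {M₀ M₁ M₂ : Set σ} {c₁ c₂ : Finset σ → L.Color} {d : L.Color}
    {A : Finset (σ ⊕ σ)}

theorem amalgC_of_sub1 (hA : (↑A : Set (σ ⊕ σ)) ⊆ Sum.inl '' M₁) :
    amalgC W h1 M₀ M₁ M₂ c₁ c₂ d A = c₁ (A.image (Sum.elim id id)) := by
  simp only [amalgC]; rw [if_pos hA]

theorem amalgC_of_sub2 (hn1 : ¬ (↑A : Set (σ ⊕ σ)) ⊆ Sum.inl '' M₁) (hA : (↑A : Set (σ ⊕ σ)) ⊆ (inj2 M₀) '' M₂) :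
    amalgC W h1 M₀ M₁ M₂ c₁ c₂ d A = c₂ (A.image (Sum.elim id id)) := by
  simp only [amalgC]; rw [if_neg hn1, if_pos hA]

theorem amalgC_mixed (hn1 : ¬ (↑A : Set (σ ⊕ σ)) ⊆ Sum.inl '' M₁) (hn2 : ¬ (↑A : Set (σ ⊕ σ)) ⊆ (inj2 M₀) '' M₂)
    (h : A.Nonempty) :
    amalgC W h1 M₀ M₁ M₂ c₁ c₂ d A =
      (gseq W h1 (Sum.elim (fun x => c₁ {x}) (fun x => c₂ {x}) h.choose) (A.card - 1)).getD
        (A.card - 1) d := by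
  simp only [amalgC]; rw [if_neg hn1, if_neg hn2, dif_pos h]

end AmalgC

/-- if `ER(w;W) = ∞` for every `w ∈ W^1`, then `K(W)` has DAP for models
of every infinite size. -/
theorem stmt17 (L : ColoringLanguage.{u}) (W : Set (List L.Color))
    (hW : L.IsAllowed W)
    (h1 : ∀ w ∈ W, w.length = 1 → ∀ γ : Ordinal.{u}, ERge W γ w) :
    ∀ lam : Cardinal.{u}, ℵ₀ ≤ lam → L.HasDAPAt W lam := by
  classical
  obtain ⟨hWne, hWdiag, hWtake⟩ := hW
  intro lam _ σ M₀ M₁ M₂ c₀ c₁ c₂ hK0 hK1 hK2 _ _ _ hsub1 hsub2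
  set d : L.Color := (L.exists_arity 1 le_rfl).choose with hd
  have hπ1 : ∀ x : σ, Sum.elim id id (Sum.inl x) = x := fun x => rfl
  have hf2_mem : ∀ x ∈ M₀, inj2 M₀ x = Sum.inl x := fun x hx => by simp [inj2, hx]
  have hf2_not : ∀ x ∉ M₀, inj2 M₀ x = Sum.inr x := fun x hx => by simp [inj2, hx]
  have hπ2 : ∀ x : σ, Sum.elim id id (inj2 M₀ x) = x := by
    intro x; by_cases h : x ∈ M₀
    · rw [hf2_mem x h]; rfl
    · rw [hf2_not x h]; rfl
  have hf2inj : Function.Injective (inj2 M₀) := fun a b h => by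
    have h' := congrArg (Sum.elim id id) h; rwa [hπ2, hπ2] at h'
  have hdisj : Sum.inl '' M₁ ∩ inj2 M₀ '' M₂ = Sum.inl '' M₀ := by
    ext a
    constructor
    · rintro ⟨⟨x, hx, rfl⟩, ⟨y, hy, hya⟩⟩
      by_cases hy0 : y ∈ M₀
      · rw [hf2_mem y hy0] at hya
        exact ⟨y, hy0, hya⟩
      · rw [hf2_not y hy0] at hya; exact absurd hya (by simp)
    · rintro ⟨x, hx, rfl⟩
      exact ⟨⟨x, hsub1.1 hx, rfl⟩, ⟨x, hsub2.1 hx, hf2_mem x hx⟩⟩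
  have hback : ∀ (f : σ → σ ⊕ σ) (S : Set σ), (∀ x, Sum.elim id id (f x) = x) →
      ∀ A : Finset (σ ⊕ σ), (↑A : Set (σ ⊕ σ)) ⊆ f '' S →
      (A.image (Sum.elim id id)).image f = A ∧
      (↑(A.image (Sum.elim id id)) : Set σ) ⊆ S ∧
      (A.image (Sum.elim id id)).card = A.card := by
    intro f S hπf A hA
    have hb : ∀ a ∈ A, f (Sum.elim id id a) = a := by
      intro a ha
      obtain ⟨x, hx, rfl⟩ := hA ha
      rw [hπf]
    refine ⟨?_, ?_, ?_⟩
    · rw [Finset.image_image]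
      have h' : A.image (f ∘ Sum.elim id id) = A.image id :=
        Finset.image_congr (fun a ha => hb a ha)
      rw [h', Finset.image_id]
    · intro x hx
      simp only [Finset.coe_image, Set.mem_image, Finset.mem_coe] at hx
      obtain ⟨a, ha, rfl⟩ := hx
      obtain ⟨y, hy, rfl⟩ := hA ha
      rw [hπf]; exact hy
    · refine Finset.card_image_of_injOn ?_
      intro a ha b hb' hab
      rw [← hb a ha, ← hb b hb', hab]
  have hov : ∀ A : Finset (σ ⊕ σ), (↑A : Set (σ ⊕ σ)) ⊆ Sum.inl '' M₁ →
      (↑A : Set (σ ⊕ σ)) ⊆ inj2 M₀ '' M₂ →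
      (↑(A.image (Sum.elim id id)) : Set σ) ⊆ M₀ := by
    intro A hA1 hA2
    have hA0 : (↑A : Set (σ ⊕ σ)) ⊆ Sum.inl '' M₀ := by
      intro a ha; rw [← hdisj]; exact ⟨hA1 ha, hA2 ha⟩
    exact (hback Sum.inl M₀ hπ1 A hA0).2.1
  have ckey1 : ∀ A : Finset (σ ⊕ σ), (↑A : Set (σ ⊕ σ)) ⊆ Sum.inl '' M₁ →
      amalgC W h1 M₀ M₁ M₂ c₁ c₂ d A = c₁ (A.image (Sum.elim id id)) :=
    fun A hA => amalgC_of_sub1 hA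
  have ckey2 : ∀ A : Finset (σ ⊕ σ), (↑A : Set (σ ⊕ σ)) ⊆ inj2 M₀ '' M₂ → A.Nonempty →
      amalgC W h1 M₀ M₁ M₂ c₁ c₂ d A = c₂ (A.image (Sum.elim id id)) := by
    intro A hA hne
    by_cases hA1 : (↑A : Set (σ ⊕ σ)) ⊆ Sum.inl '' M₁
    · have hA0 := hov A hA1 hA
      have hne' : (A.image (Sum.elim id id)).Nonempty := hne.image _
      rw [ckey1 A hA1, ← hsub1.2 _ hA0 hne', hsub2.2 _ hA0 hne']
    · exact amalgC_of_sub2 hA1 hA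
  have csingle : ∀ a ∈ Sum.inl '' M₁ ∪ inj2 M₀ '' M₂,
      amalgC W h1 M₀ M₁ M₂ c₁ c₂ d {a} =
        Sum.elim (fun x => c₁ {x}) (fun x => c₂ {x}) a ∧
      [amalgC W h1 M₀ M₁ M₂ c₁ c₂ d {a}] ∈ W ∧
      L.arity (amalgC W h1 M₀ M₁ M₂ c₁ c₂ d {a}) = 1 := by
    rintro a (⟨x, hx, rfl⟩ | ⟨x, hx, rfl⟩)
    · have hsubA : (↑({Sum.inl x} : Finset (σ ⊕ σ)) : Set (σ ⊕ σ)) ⊆ Sum.inl '' M₁ := by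
        simp only [Finset.coe_singleton, Set.singleton_subset_iff]
        exact ⟨x, hx, rfl⟩
      have e : amalgC W h1 M₀ M₁ M₂ c₁ c₂ d {Sum.inl x} = c₁ {x} := by
        rw [ckey1 _ hsubA]
        congr 1
      refine ⟨by rw [e, Sum.elim_inl], by rw [e]; exact singleton_diag_mem hK1 hx, ?_⟩
      rw [e]
      simpa using hK1.1 {x} (by simpa using hx) ⟨x, Finset.mem_singleton_self x⟩
    · have hsubA : (↑({inj2 M₀ x} : Finset (σ ⊕ σ)) : Set (σ ⊕ σ)) ⊆ inj2 M₀ '' M₂ := by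
        simp only [Finset.coe_singleton, Set.singleton_subset_iff]
        exact ⟨x, hx, rfl⟩
      have e : amalgC W h1 M₀ M₁ M₂ c₁ c₂ d {inj2 M₀ x} = c₂ {x} := by
        rw [ckey2 _ hsubA ⟨_, Finset.mem_singleton_self _⟩]
        congr 1
        rw [Finset.image_singleton, hπ2]
      refine ⟨?_, by rw [e]; exact singleton_diag_mem hK2 hx, ?_⟩
      · rw [e]
        by_cases hx0 : x ∈ M₀
        · rw [hf2_mem x hx0]
          show c₂ {x} = c₁ {x}
          rw [← hsub1.2 {x} (by simpa using hx0) ⟨x, Finset.mem_singleton_self x⟩,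
            hsub2.2 {x} (by simpa using hx0) ⟨x, Finset.mem_singleton_self x⟩]
        · rw [hf2_not x hx0, Sum.elim_inr]
      · rw [e]
        simpa using hK2.1 {x} (by simpa using hx) ⟨x, Finset.mem_singleton_self x⟩
  have case12 : ∀ (f : σ → σ ⊕ σ) (S : Set σ) (cᵢ : Finset σ → L.Color),
      Function.Injective f → (∀ x, Sum.elim id id (f x) = x) →
      (∀ A : Finset (σ ⊕ σ), (↑A : Set (σ ⊕ σ)) ⊆ f '' S → A.Nonempty →
        amalgC W h1 M₀ M₁ M₂ c₁ c₂ d A = cᵢ (A.image (Sum.elim id id))) →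
      L.MemK W S cᵢ →
      ∀ B : Finset (σ ⊕ σ), (↑B : Set (σ ⊕ σ)) ⊆ f '' S → B.Nonempty →
        L.Mono (amalgC W h1 M₀ M₁ M₂ c₁ c₂ d) ↑B →
        ∃ l ∈ W, L.DiagramOf (amalgC W h1 M₀ M₁ M₂ c₁ c₂ d) B l := by
    intro f S cᵢ hfinj hπf hckey hKS B hB hBne hmonoB
    obtain ⟨himgf, hsubS, hcard⟩ := hback f S hπf B hB
    have hliftsub : ∀ A' : Finset σ, A' ⊆ B.image (Sum.elim id id) → A'.image f ⊆ B := by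
      intro A' hA' a ha
      simp only [Finset.mem_image] at ha
      obtain ⟨x, hxA, rfl⟩ := ha
      have hx' := hA' hxA
      simp only [Finset.mem_image] at hx'
      obtain ⟨b, hbB, rfl⟩ := hx'
      obtain ⟨y, hy, rfl⟩ := hB hbB
      rw [hπf]; exact hbB
    have hcval : ∀ A' : Finset σ, A' ⊆ B.image (Sum.elim id id) → A'.Nonempty →
        amalgC W h1 M₀ M₁ M₂ c₁ c₂ d (A'.image f) = cᵢ A' := by
      intro A' hA' hne
      have hsubfS : (↑(A'.image f) : Set (σ ⊕ σ)) ⊆ f '' S := by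
        intro a ha
        simp only [Finset.coe_image, Set.mem_image, Finset.mem_coe] at ha
        obtain ⟨x, hxA, rfl⟩ := ha
        exact ⟨x, hsubS (Finset.mem_coe.mpr (hA' hxA)), rfl⟩
      rw [hckey _ hsubfS (hne.image f), Finset.image_image]
      congr 1
      have h' : A'.image (Sum.elim id id ∘ f) = A'.image id :=
        Finset.image_congr (fun x _ => hπf x)
      rw [h', Finset.image_id]
    have hmono' : L.Mono cᵢ ↑(B.image (Sum.elim id id)) := by
      intro A₁ A₂ h₁ h₂ hne hcardeq
      have h₁' := Finset.coe_subset.mp h₁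
      have h₂' := Finset.coe_subset.mp h₂
      have hne₂ : A₂.Nonempty := by
        rw [← Finset.card_pos, ← hcardeq, Finset.card_pos]; exact hne
      rw [← hcval A₁ h₁' hne, ← hcval A₂ h₂' hne₂]
      exact hmonoB (A₁.image f) (A₂.image f) (Finset.coe_subset.mpr (hliftsub A₁ h₁'))
        (Finset.coe_subset.mpr (hliftsub A₂ h₂')) (hne.image f)
        (by rw [Finset.card_image_of_injective _ hfinj,
          Finset.card_image_of_injective _ hfinj, hcardeq])
    obtain ⟨l, hlW, hlen, hspec⟩ :=
      hKS.2 (B.image (Sum.elim id id)) hsubS (hBne.image _) hmono'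
    refine ⟨l, hlW, ?_, ?_⟩
    · rw [hlen, hcard]
    · intro A hAB hne
      obtain ⟨_, _, hcardA⟩ := hback f S hπf A (fun a ha => hB (hAB ha))
      have h3 := hspec (A.image (Sum.elim id id)) (Finset.image_subset_image hAB)
        (hne.image _)
      rw [hcardA] at h3
      rw [hckey A (fun a ha => hB (hAB ha)) hne]
      exact h3
  refine ⟨σ ⊕ σ, Sum.inl '' M₁ ∪ inj2 M₀ '' M₂, amalgC W h1 M₀ M₁ M₂ c₁ c₂ d,
    Sum.inl, inj2 M₀, ⟨?_, ?_⟩, ?_, ?_, ?_, hdisj⟩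
  · -- IsColoring
    intro A hA hne
    by_cases hA1 : (↑A : Set (σ ⊕ σ)) ⊆ Sum.inl '' M₁
    · rw [ckey1 A hA1]
      obtain ⟨_, hsubS, hcardA⟩ := hback Sum.inl M₁ hπ1 A hA1
      rw [hK1.1 _ hsubS (hne.image _), hcardA]
    · by_cases hA2 : (↑A : Set (σ ⊕ σ)) ⊆ inj2 M₀ '' M₂
      · rw [ckey2 A hA2 hne]
        obtain ⟨_, hsubS, hcardA⟩ := hback (inj2 M₀) M₂ hπ2 A hA2
        rw [hK2.1 _ hsubS (hne.image _), hcardA]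
      · rw [amalgC_mixed hA1 hA2 hne]
        have hch : hne.choose ∈ A := hne.choose_spec
        have hcs := csingle hne.choose (hA hch)
        have hrW : [Sum.elim (fun x => c₁ {x}) (fun x => c₂ {x}) hne.choose] ∈ W := by
          rw [← hcs.1]; exact hcs.2.1
        have hm : A.card - 1 <
            (gseq W h1 (Sum.elim (fun x => c₁ {x}) (fun x => c₂ {x}) hne.choose)
              (A.card - 1)).length := by
          rw [gseq_length W h1 hrW]; omega
        rw [List.getD_eq_getElem _ _ hm]
        rw [hWdiag _ (gseq_mem W h1 hrW (A.card - 1)) (A.card - 1) hm]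
        have hc1 : 1 ≤ A.card := Finset.card_pos.mpr hne
        omega
  · -- monochromatic diagrams
    intro B hB hBne hmonoB
    by_cases hB1 : (↑B : Set (σ ⊕ σ)) ⊆ Sum.inl '' M₁
    · exact case12 Sum.inl M₁ c₁ Sum.inl_injective hπ1 (fun A hA _ => ckey1 A hA) hK1 B
        hB1 hBne hmonoB
    · by_cases hB2 : (↑B : Set (σ ⊕ σ)) ⊆ inj2 M₀ '' M₂
      · exact case12 (inj2 M₀) M₂ c₂ hf2inj hπ2 (fun A hA hne => ckey2 A hA hne) hK2 B
          hB2 hBne hmonoB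
      · obtain ⟨p, hpB, hp⟩ := Set.not_subset.mp hB1
        obtain ⟨q, hqB, hq⟩ := Set.not_subset.mp hB2
        have hpB' : p ∈ B := hpB
        have hqB' : q ∈ B := hqB
        have hqM1 : q ∈ Sum.inl '' M₁ := Or.resolve_right (hB hqB) hq
        have hpq : p ≠ q := fun h => hp (by rw [h]; exact hqM1)
        have hrW : [amalgC W h1 M₀ M₁ M₂ c₁ c₂ d {q}] ∈ W := (csingle q (hB hqB)).2.1
        set r : L.Color := amalgC W h1 M₀ M₁ M₂ c₁ c₂ d {q} with hrdef
        have hsing : ∀ a ∈ B, amalgC W h1 M₀ M₁ M₂ c₁ c₂ d {a} = r := by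
          intro a ha
          exact hmonoB {a} {q}
            (by simp only [Finset.coe_singleton, Set.singleton_subset_iff]
                exact Finset.mem_coe.mpr ha)
            (by simp only [Finset.coe_singleton, Set.singleton_subset_iff]
                exact Finset.mem_coe.mpr hqB')
            ⟨a, Finset.mem_singleton_self a⟩ (by simp)
        have cmix : ∀ A : Finset (σ ⊕ σ), A ⊆ B → p ∈ A → q ∈ A →
            amalgC W h1 M₀ M₁ M₂ c₁ c₂ d A =
              (gseq W h1 r (A.card - 1)).getD (A.card - 1) d := by
          intro A hAB hpA hqA
          have hne : A.Nonempty := ⟨p, hpA⟩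
          have hn1 : ¬ (↑A : Set (σ ⊕ σ)) ⊆ Sum.inl '' M₁ :=
            fun h => hp (h (Finset.mem_coe.mpr hpA))
          have hn2 : ¬ (↑A : Set (σ ⊕ σ)) ⊆ inj2 M₀ '' M₂ :=
            fun h => hq (h (Finset.mem_coe.mpr hqA))
          rw [amalgC_mixed hn1 hn2 hne]
          have hch : hne.choose ∈ A := hne.choose_spec
          have e1 : Sum.elim (fun x => c₁ {x}) (fun x => c₂ {x}) hne.choose = r := by
            rw [← (csingle hne.choose (hB (Finset.mem_coe.mpr (hAB hch)))).1]
            exact hsing hne.choose (hAB hch)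
          rw [e1]
        have cval : ∀ A : Finset (σ ⊕ σ), A ⊆ B → A.Nonempty →
            amalgC W h1 M₀ M₁ M₂ c₁ c₂ d A =
              (gseq W h1 r (A.card - 1)).getD (A.card - 1) d := by
          intro A hAB hne
          rcases Nat.lt_or_ge A.card 2 with hk | hk
          · have hcard1 : A.card = 1 := by
              have := Finset.card_pos.mpr hne; omega
            obtain ⟨y, rfl⟩ := Finset.card_eq_one.mp hcard1
            simp only [Finset.card_singleton, Nat.sub_self]
            rw [gseq_zero W h1 hrW, hsing y (hAB (Finset.mem_singleton_self y))]
            rfl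
          · have hpqsub : ({p, q} : Finset (σ ⊕ σ)) ⊆ B := by
              intro a ha
              rcases Finset.mem_insert.mp ha with rfl | h
              · exact hpB'
              · rw [Finset.mem_singleton.mp h]; exact hqB'
            obtain ⟨A', hsubA', hA'B, hcardA'⟩ := Finset.exists_subsuperset_card_eq hpqsub
              (by rw [Finset.card_pair hpq]; exact hk) (Finset.card_le_card hAB)
            have hAA' := hmonoB A A' (Finset.coe_subset.mpr hAB)
              (Finset.coe_subset.mpr hA'B) hne (by rw [hcardA'])
            rw [hAA', cmix A' hA'B (hsubA' (Finset.mem_insert_self p {q}))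
              (hsubA' (by simp)), hcardA']
        refine ⟨gseq W h1 r (B.card - 1), gseq_mem W h1 hrW _, ?_, ?_⟩
        · rw [gseq_length W h1 hrW]
          have := Finset.card_pos.mpr hBne; omega
        · intro A hAB hne
          have hm : A.card - 1 < (gseq W h1 r (B.card - 1)).length := by
            rw [gseq_length W h1 hrW]
            have h1' := Finset.card_pos.mpr hne
            have h2' := Finset.card_le_card hAB
            omega
          rw [List.getElem?_eq_getElem hm]
          congr 1
          rw [cval A hAB hne]
          rw [← gseq_getD W h1 hrW d (show A.card - 1 ≤ B.card - 1 by
            have := Finset.card_le_card hAB; omega)]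
          rw [List.getD_eq_getElem _ _ hm]
  · -- Emb f₁
    refine ⟨Sum.inl_injective.injOn, Set.subset_union_left, ?_⟩
    intro A hA hne
    have key : ∀ A' : Finset (σ ⊕ σ), A' = A.image (Sum.inl : σ → σ ⊕ σ) →
        amalgC W h1 M₀ M₁ M₂ c₁ c₂ d A' = c₁ A := by
      rintro A' rfl
      have hsub : (↑(A.image (Sum.inl : σ → σ ⊕ σ)) : Set (σ ⊕ σ)) ⊆ Sum.inl '' M₁ := by
        intro a ha
        simp only [Finset.coe_image, Set.mem_image, Finset.mem_coe] at ha
        obtain ⟨x, hx, rfl⟩ := ha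
        exact ⟨x, hA hx, rfl⟩
      rw [ckey1 _ hsub, Finset.image_image]
      congr 1
      have h' : A.image (Sum.elim id id ∘ Sum.inl) = A.image id :=
        Finset.image_congr (fun x _ => rfl)
      rw [h', Finset.image_id]
    exact key _ (by congr; exact Subsingleton.elim _ _)
  · -- Emb f₂
    refine ⟨hf2inj.injOn, Set.subset_union_right, ?_⟩
    intro A hA hne
    have key : ∀ A' : Finset (σ ⊕ σ), A' = A.image (inj2 M₀) →
        amalgC W h1 M₀ M₁ M₂ c₁ c₂ d A' = c₂ A := by
      rintro A' rfl
      have hsub : (↑(A.image (inj2 M₀)) : Set (σ ⊕ σ)) ⊆ inj2 M₀ '' M₂ := by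
        intro a ha
        simp only [Finset.coe_image, Set.mem_image, Finset.mem_coe] at ha
        obtain ⟨x, hx, rfl⟩ := ha
        exact ⟨x, hA hx, rfl⟩
      rw [ckey2 _ hsub (hne.image _), Finset.image_image]
      congr 1
      have h' : A.image (Sum.elim id id ∘ inj2 M₀) = A.image id :=
        Finset.image_congr (fun x _ => hπ2 x)
      rw [h', Finset.image_id]
    exact key _ (by congr; exact Subsingleton.elim _ _)
  · intro x hx
    exact (hf2_mem x hx).symm
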